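/- arXiv:2509.06255 — 2 statements merged into one kernel-verified Lean document; each statement's English description precedes it below -/
import Mathlib

section
/- Fix k ≥ 1. Let ω be the 2×2 real matrix with rows (0,1) and (−1,0), let z be the 2×2 real matrix with rows (1,0) and (0,−1), and let Ω and Z be the 2k×2k block-diagonal matrices with k copies of ω and of z respectively. Let S be a 2k×2k real matrix satisfying Sᵀ·Ω·S = Ω and Ω·S·Z + S·Z·Ω = 0. Then Sᵀ·S = 1. -/
open Matrix

/-- The single-mode symplectic form `ω = [[0,1],[−1,0]]`. -/
def omegaMat : Matrix (Fin 2) (Fin 2) ℝ := !![0, 1; -1, 0]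

/-- The matrix `z = [[1,0],[0,−1]]`. -/
def zMat : Matrix (Fin 2) (Fin 2) ℝ := !![1, 0; 0, -1]

/-- The `2k × 2k` block-diagonal symplectic form `Ω` built from `k` copies of `ω`,
with the `2k` indices represented as `Fin 2 × Fin k`. -/
def OmegaMat (k : ℕ) : Matrix (Fin 2 × Fin k) (Fin 2 × Fin k) ℝ :=
  Matrix.blockDiagonal fun _ : Fin k => omegaMat

/-- The `2k × 2k` block-diagonal matrix `Z` built from `k` copies of `z`. -/
def ZMat (k : ℕ) : Matrix (Fin 2 × Fin k) (Fin 2 × Fin k) ℝ :=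
  Matrix.blockDiagonal fun _ : Fin k => zMat

lemma omega_sq : omegaMat * omegaMat = -1 := by
  ext i j
  fin_cases i <;> fin_cases j <;>
    simp [omegaMat, Matrix.mul_apply, Fin.sum_univ_two, Matrix.one_apply]

lemma z_sq : zMat * zMat = 1 := by
  ext i j
  fin_cases i <;> fin_cases j <;>
    simp [zMat, Matrix.mul_apply, Fin.sum_univ_two, Matrix.one_apply]

lemma zomega : zMat * omegaMat = -(omegaMat * zMat) := by
  ext i j
  fin_cases i <;> fin_cases j <;>
    simp [zMat, omegaMat, Matrix.mul_apply, Fin.sum_univ_two]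

lemma Omega_sq (k : ℕ) : OmegaMat k * OmegaMat k = -1 := by
  rw [OmegaMat, ← Matrix.blockDiagonal_mul]
  simp only [omega_sq]
  exact (Matrix.blockDiagonal_neg 1).trans (by rw [Matrix.blockDiagonal_one])

lemma Z_sq (k : ℕ) : ZMat k * ZMat k = 1 := by
  rw [ZMat, ← Matrix.blockDiagonal_mul]
  simp only [z_sq]
  exact Matrix.blockDiagonal_one

lemma ZOmega (k : ℕ) : ZMat k * OmegaMat k = -(OmegaMat k * ZMat k) := by
  rw [ZMat, OmegaMat, ← Matrix.blockDiagonal_mul, ← Matrix.blockDiagonal_mul]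
  simp only [zomega]
  exact Matrix.blockDiagonal_neg _

theorem stmt_9 (k : ℕ) (hk : 1 ≤ k)
    (S : Matrix (Fin 2 × Fin k) (Fin 2 × Fin k) ℝ)
    (hsymp : Sᵀ * OmegaMat k * S = OmegaMat k)
    (hanti : OmegaMat k * S * ZMat k + S * ZMat k * OmegaMat k = 0) :
    Sᵀ * S = 1 := by
  set Ω := OmegaMat k
  set Z := ZMat k
  -- From hanti: Ω S Z = S Ω Z, hence Ω S = S Ω (multiply by Z on right).
  have h1 : Ω * S * Z = S * Ω * Z := by
    have h2 : S * Z * Ω = -(S * Ω * Z) := by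
      rw [Matrix.mul_assoc, ZOmega k, Matrix.mul_neg, ← Matrix.mul_assoc]
    rw [h2, add_neg_eq_zero] at hanti
    exact hanti
  have hcomm : Ω * S = S * Ω := by
    have := congrArg (· * Z) h1
    simpa [Matrix.mul_assoc, (show Z * Z = 1 from Z_sq k)] using this
  -- Then SᵀSΩ = SᵀΩS = Ω, so SᵀS Ω² = Ω², i.e. -SᵀS = -1.
  have h3 : Sᵀ * S * Ω = Ω := by
    calc Sᵀ * S * Ω = Sᵀ * (S * Ω) := by rw [Matrix.mul_assoc]
    _ = Sᵀ * (Ω * S) := by rw [hcomm]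
    _ = Sᵀ * Ω * S := by rw [Matrix.mul_assoc]
    _ = Ω := hsymp
  have h4 := congrArg (· * Ω) h3
  simp only [Matrix.mul_assoc, (show Ω * Ω = -1 from Omega_sq k), Matrix.mul_neg, Matrix.mul_one,
    neg_inj] at h4
  exact h4
end

section
/- Fix k ≥ 1. Let ω be the 2×2 real matrix with rows (0,1) and (−1,0) and Ω the 2k×2k block-diagonal matrix with k copies of ω. Let C be a 2k×2k real symmetric matrix with the complex Hermitian matrix C − i·Ω positive semidefinite, let β ∈ ℝ^{2k}, and let t₁, t₂ : Fin k → ℝ with t₁(m) > 1 and t₂(m) > 1 for all m. Define s(m) = (t₁(m)·t₂(m) + 1)/(t₁(m) + t₂(m)), and for a function u : Fin k → ℝ with u(m) > 1, let T_u be the paired diagonal matrix diag(u₁,u₁,…,u_k,u_k), let √(T_u²−1) be the paired diagonal with entries √(u(m)²−1), and define 𝒟_u(C) = T_u − √(T_u²−1)·(C + T_u)⁻¹·√(T_u²−1) and 𝒟_u(β) = √(T_u²−1)·((C + T_u)⁻¹.mulVec β). Then 𝒟_{t₁}(𝒟_{t₂}(C)) = 𝒟_{s}(C), and √(T_{t₁}²−1)·((𝒟_{t₂}(C)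 + T_{t₁})⁻¹.mulVec (𝒟_{t₂}(β))) = 𝒟_{s}(β). -/
open scoped ComplexOrder

/-- The paired diagonal matrix `diag(u₁,u₁,…,u_k,u_k)`, with the `2k` indices
represented as `Fin 2 × Fin k`. -/
noncomputable def pairedDiagonal {k : ℕ} (u : Fin k → ℝ) :
    Matrix (Fin 2 × Fin k) (Fin 2 × Fin k) ℝ :=
  Matrix.diagonal fun p => u p.2

/-- The uncertainty relation `C ⪰ iΩ`: the complex Hermitian matrix `C − i·Ω`
is positive semidefinite. -/
def UncertaintyOK {k : ℕ} (C : Matrix (Fin 2 × Fin k) (Fin 2 × Fin k) ℝ) : Prop :=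
  (C.map (Complex.ofReal) - Complex.I • (OmegaMat k).map (Complex.ofReal)).PosSemidef

/-- The damping transformation `𝒟_u(C) = T_u − √(T_u²−1)(C + T_u)⁻¹√(T_u²−1)`
of the control covariance matrix. -/
noncomputable def dampC {k : ℕ} (u : Fin k → ℝ)
    (C : Matrix (Fin 2 × Fin k) (Fin 2 × Fin k) ℝ) :
    Matrix (Fin 2 × Fin k) (Fin 2 × Fin k) ℝ :=
  pairedDiagonal u -
    pairedDiagonal (fun m => Real.sqrt ((u m) ^ 2 - 1)) *
      (C + pairedDiagonal u)⁻¹ *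
      pairedDiagonal (fun m => Real.sqrt ((u m) ^ 2 - 1))

/-- The damping transformation `𝒟_u(β) = √(T_u²−1)(C + T_u)⁻¹β` of the control
mean vector. -/
noncomputable def dampBeta {k : ℕ} (u : Fin k → ℝ)
    (C : Matrix (Fin 2 × Fin k) (Fin 2 × Fin k) ℝ) (β : Fin 2 × Fin k → ℝ) :
    Fin 2 × Fin k → ℝ :=
  (pairedDiagonal (fun m => Real.sqrt ((u m) ^ 2 - 1))).mulVec
    ((C + pairedDiagonal u)⁻¹.mulVec β)

open Matrix

variable {k : ℕ}

lemma pd_mul (u v : Fin k → ℝ) :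
    pairedDiagonal u * pairedDiagonal v = pairedDiagonal (fun m => u m * v m) := by
  simp only [pairedDiagonal, diagonal_mul_diagonal]

lemma pd_add (u v : Fin k → ℝ) :
    pairedDiagonal u + pairedDiagonal v = pairedDiagonal (fun m => u m + v m) := by
  simp only [pairedDiagonal, diagonal_add]

lemma pd_sub (u v : Fin k → ℝ) :
    pairedDiagonal u - pairedDiagonal v = pairedDiagonal (fun m => u m - v m) := by
  simp only [pairedDiagonal, diagonal_sub]

lemma pd_ext {u v : Fin k → ℝ} (h : ∀ m, u m = v m) : pairedDiagonal u = pairedDiagonal v := by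
  exact congrArg Matrix.diagonal (funext fun p => h p.2)

lemma pd_one : pairedDiagonal (fun _ : Fin k => (1 : ℝ)) = 1 := by
  simp [pairedDiagonal]

lemma pd_inv {u : Fin k → ℝ} (h : ∀ m, u m ≠ 0) :
    (pairedDiagonal u)⁻¹ = pairedDiagonal (fun m => (u m)⁻¹) := by
  apply Matrix.inv_eq_right_inv
  rw [pd_mul, ← pd_one]
  exact pd_ext fun m => mul_inv_cancel₀ (h m)

lemma pd_posDef {u : Fin k → ℝ} (h : ∀ m, 0 < u m) : (pairedDiagonal u).PosDef :=
  Matrix.PosDef.diagonal fun p => h p.2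

lemma omega_transpose : (OmegaMat k)ᵀ = -(OmegaMat k) := by
  ext ⟨i, m⟩ ⟨j, n⟩
  simp only [Matrix.transpose_apply, Matrix.neg_apply, OmegaMat, Matrix.blockDiagonal_apply]
  by_cases h : m = n
  · subst h
    simp only [if_pos rfl]
    fin_cases i <;> fin_cases j <;> simp [omegaMat]
  · simp [h, Ne.symm h]

lemma C_psd (C : Matrix (Fin 2 × Fin k) (Fin 2 × Fin k) ℝ) (hs : C.IsSymm)
    (h : UncertaintyOK C) : C.PosSemidef := by
  refine Matrix.posSemidef_iff_dotProduct_mulVec.mpr ⟨?_, ?_⟩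
  · exact hs
  · intro x
    have h2 := h.dotProduct_mulVec_nonneg (fun p => (x p : ℂ))
    have hstar : star (fun p => (x p : ℂ)) = fun p => (x p : ℂ) := by
      funext p; simp
    have hOmega : x ⬝ᵥ (OmegaMat k) *ᵥ x = 0 := by
      have h1 : x ⬝ᵥ (OmegaMat k) *ᵥ x = -(x ⬝ᵥ (OmegaMat k) *ᵥ x) := by
        conv_lhs => rw [Matrix.dotProduct_mulVec, ← Matrix.transpose_transpose (OmegaMat k),
          Matrix.vecMul_transpose, omega_transpose, Matrix.neg_mulVec, neg_dotProduct,
          dotProduct_comm]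
      linarith
    have key : (star (fun p => (x p : ℂ))) ⬝ᵥ
        ((C.map Complex.ofReal - Complex.I • (OmegaMat k).map Complex.ofReal) *ᵥ
          (fun p => (x p : ℂ)))
        = ((x ⬝ᵥ C *ᵥ x : ℝ) : ℂ) := by
      rw [hstar]
      simp only [Matrix.sub_mulVec, dotProduct_sub, Matrix.smul_mulVec,
        dotProduct_smul]
      have e1 : (fun p => (x p : ℂ)) ⬝ᵥ (C.map Complex.ofReal) *ᵥ (fun p => (x p : ℂ))
          = ((x ⬝ᵥ C *ᵥ x : ℝ) : ℂ) := by
        simp only [dotProduct, Matrix.mulVec, Matrix.map_apply]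
        push_cast
        rfl
      have e2 : (fun p => (x p : ℂ)) ⬝ᵥ ((OmegaMat k).map Complex.ofReal) *ᵥ (fun p => (x p : ℂ))
          = ((x ⬝ᵥ (OmegaMat k) *ᵥ x : ℝ) : ℂ) := by
        simp only [dotProduct, Matrix.mulVec, Matrix.map_apply]
        push_cast
        rfl
      rw [e1, e2, hOmega]
      simp
    rw [key] at h2
    exact_mod_cast h2

theorem stmt_11 (k : ℕ) (hk : 1 ≤ k)
    (C : Matrix (Fin 2 × Fin k) (Fin 2 × Fin k) ℝ) (hCsymm : C.IsSymm)
    (hC : UncertaintyOK C)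
    (β : Fin 2 × Fin k → ℝ)
    (t₁ t₂ : Fin k → ℝ) (ht₁ : ∀ m, 1 < t₁ m) (ht₂ : ∀ m, 1 < t₂ m) :
    dampC t₁ (dampC t₂ C) =
      dampC (fun m => (t₁ m * t₂ m + 1) / (t₁ m + t₂ m)) C ∧
    dampBeta t₁ (dampC t₂ C) (dampBeta t₂ C β) =
      dampBeta (fun m => (t₁ m * t₂ m + 1) / (t₁ m + t₂ m)) C β := by
  classical
  have hCpsd : C.PosSemidef := C_psd C hCsymm hC
  -- scalar facts
  have hr : ∀ m, 0 < t₁ m + t₂ m := fun m => by nlinarith [ht₁ m, ht₂ m]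
  set s : Fin k → ℝ := fun m => (t₁ m * t₂ m + 1) / (t₁ m + t₂ m) with hs_def
  set a : Fin k → ℝ := fun m => Real.sqrt (t₁ m ^ 2 - 1) with ha_def
  set b : Fin k → ℝ := fun m => Real.sqrt (t₂ m ^ 2 - 1) with hb_def
  have hs1 : ∀ m, 1 < s m := fun m => by
    rw [hs_def, lt_div_iff₀ (hr m)]; nlinarith [ht₁ m, ht₂ m]
  have ha2 : ∀ m, a m ^ 2 = t₁ m ^ 2 - 1 := fun m =>
    Real.sq_sqrt (by nlinarith [ht₁ m])
  have hb2 : ∀ m, b m ^ 2 = t₂ m ^ 2 - 1 := fun m =>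
    Real.sq_sqrt (by nlinarith [ht₂ m])
  have ha0 : ∀ m, 0 < a m := fun m => Real.sqrt_pos.2 (by nlinarith [ht₁ m])
  have hb0 : ∀ m, 0 < b m := fun m => Real.sqrt_pos.2 (by nlinarith [ht₂ m])
  have hcc : ∀ m, Real.sqrt (s m ^ 2 - 1) = a m * b m / (t₁ m + t₂ m) := by
    intro m
    have h1 : s m ^ 2 - 1 = (a m * b m / (t₁ m + t₂ m)) ^ 2 := by
      rw [show (a m * b m / (t₁ m + t₂ m)) ^ 2
          = (t₁ m ^ 2 - 1) * (t₂ m ^ 2 - 1) / (t₁ m + t₂ m) ^ 2 from by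
        rw [div_pow, mul_pow, ha2 m, hb2 m]]
      simp only [hs_def]
      have hrne : ((t₁ m + t₂ m) ^ 2 : ℝ) ≠ 0 := pow_ne_zero 2 (hr m).ne'
      rw [div_pow, div_sub' hrne,
        div_eq_div_iff hrne hrne]
      ring
    rw [h1, Real.sqrt_sq (div_nonneg (mul_nonneg (ha0 m).le (hb0 m).le) (hr m).le)]
  -- matrix setup
  simp only [dampC, dampBeta]
  rw [← ha_def, ← hb_def]
  set A := C + pairedDiagonal t₂ with hA_def
  set B := C + pairedDiagonal s with hB_def
  set E := pairedDiagonal (fun m => b m ^ 2 / (t₁ m + t₂ m)) with hE_def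
  have hApd : A.PosDef :=
    Matrix.PosDef.posSemidef_add hCpsd (pd_posDef fun m => lt_trans one_pos (ht₂ m))
  have hBpd : B.PosDef :=
    Matrix.PosDef.posSemidef_add hCpsd (pd_posDef fun m => lt_trans one_pos (hs1 m))
  have hAdet : IsUnit A.det := (Matrix.isUnit_iff_isUnit_det A).1 hApd.isUnit
  have hBdet : IsUnit B.det := (Matrix.isUnit_iff_isUnit_det B).1 hBpd.isUnit
  have hAB : A = B + E := by
    rw [hA_def, hB_def, hE_def, add_assoc, pd_add]
    congr 1
    exact pd_ext fun m => by
      simp only [hs_def, hb2 m]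
      field_simp [(hr m).ne']
      ring
  have hBA : B = A - E := by rw [hAB, add_sub_cancel_right]
  set M := pairedDiagonal t₂ - pairedDiagonal b * A⁻¹ * pairedDiagonal b + pairedDiagonal t₁
    with hM_def
  have hM : M = pairedDiagonal (fun m => (t₁ m + t₂ m) / b m) * B * A⁻¹ * pairedDiagonal b := by
    have h1 : pairedDiagonal (fun m => (t₁ m + t₂ m) / b m) * E = pairedDiagonal b := by
      rw [hE_def, pd_mul]
      exact pd_ext fun m => by
        field_simp [(hr m).ne', (hb0 m).ne']
    have h2 : pairedDiagonal (fun m => (t₁ m + t₂ m) / b m) * pairedDiagonal b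
        = pairedDiagonal (fun m => t₁ m + t₂ m) := by
      rw [pd_mul]
      exact pd_ext fun m => div_mul_cancel₀ _ (hb0 m).ne'
    calc M = pairedDiagonal (fun m => t₁ m + t₂ m)
          - pairedDiagonal b * A⁻¹ * pairedDiagonal b := by
          rw [hM_def, ← pd_add t₁ t₂]
          abel
      _ = pairedDiagonal (fun m => (t₁ m + t₂ m) / b m) * pairedDiagonal b
          - pairedDiagonal (fun m => (t₁ m + t₂ m) / b m) * E * A⁻¹ * pairedDiagonal b := by
          rw [h1, h2]
      _ = pairedDiagonal (fun m => (t₁ m + t₂ m) / b m) * (A - E) * A⁻¹ * pairedDiagonal b := by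
          rw [mul_sub, sub_mul, sub_mul,
            mul_assoc (pairedDiagonal fun m => (t₁ m + t₂ m) / b m) A A⁻¹,
            Matrix.mul_nonsing_inv A hAdet, mul_one]
      _ = pairedDiagonal (fun m => (t₁ m + t₂ m) / b m) * B * A⁻¹ * pairedDiagonal b := by
          rw [← hBA]
  have hMinv : M⁻¹ = pairedDiagonal (fun m => (b m)⁻¹) * A * B⁻¹
      * pairedDiagonal (fun m => b m / (t₁ m + t₂ m)) := by
    rw [hM, Matrix.mul_inv_rev, Matrix.mul_inv_rev, Matrix.mul_inv_rev,
      Matrix.nonsing_inv_nonsing_inv A hAdet,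
      pd_inv (fun m => (hb0 m).ne'),
      pd_inv (fun m => (div_pos (hr m) (hb0 m)).ne'),
      pd_ext (fun m => inv_div (t₁ m + t₂ m) (b m))]
    simp only [mul_assoc]
  have hkey : A * B⁻¹ * E = E * B⁻¹ * A := by
    calc A * B⁻¹ * E = (B + E) * B⁻¹ * E := by rw [← hAB]
      _ = E + E * B⁻¹ * E := by
          rw [add_mul, add_mul, Matrix.mul_nonsing_inv B hBdet, one_mul]
      _ = E * B⁻¹ * B + E * B⁻¹ * E := by
          rw [mul_assoc E B⁻¹ B, Matrix.nonsing_inv_mul B hBdet, mul_one]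
      _ = E * B⁻¹ * (B + E) := (mul_add (E * B⁻¹) B E).symm
      _ = E * B⁻¹ * A := by rw [← hAB]
  have hkey2 : A * B⁻¹ * E * A⁻¹ = E * B⁻¹ := by
    rw [hkey, mul_assoc, Matrix.mul_nonsing_inv A hAdet, mul_one]
  constructor
  · rw [hMinv, pd_ext hcc]
    have hX : pairedDiagonal a
        * ((pairedDiagonal fun m => (b m)⁻¹) * A * B⁻¹
            * pairedDiagonal fun m => b m / (t₁ m + t₂ m))
        * pairedDiagonal a
        = pairedDiagonal (fun m => a m ^ 2 / (t₁ m + t₂ m))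
          + pairedDiagonal (fun m => a m * b m / (t₁ m + t₂ m)) * B⁻¹
            * pairedDiagonal (fun m => a m * b m / (t₁ m + t₂ m)) := by
      calc pairedDiagonal a
            * ((pairedDiagonal fun m => (b m)⁻¹) * A * B⁻¹
                * pairedDiagonal fun m => b m / (t₁ m + t₂ m))
            * pairedDiagonal a
          = (pairedDiagonal a * pairedDiagonal fun m => (b m)⁻¹)
            * ((B + E) * (B⁻¹ * ((pairedDiagonal fun m => b m / (t₁ m + t₂ m))
                * pairedDiagonal a))) := by
            rw [hAB]; simp only [mul_assoc]
        _ = (pairedDiagonal a * pairedDiagonal fun m => (b m)⁻¹)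
            * (B * (B⁻¹ * ((pairedDiagonal fun m => b m / (t₁ m + t₂ m))
                * pairedDiagonal a)))
            + (pairedDiagonal a * pairedDiagonal fun m => (b m)⁻¹)
            * (E * (B⁻¹ * ((pairedDiagonal fun m => b m / (t₁ m + t₂ m))
                * pairedDiagonal a))) := by
            rw [add_mul, mul_add]
        _ = (pairedDiagonal a * pairedDiagonal fun m => (b m)⁻¹)
            * ((pairedDiagonal fun m => b m / (t₁ m + t₂ m)) * pairedDiagonal a)
            + (pairedDiagonal a * pairedDiagonal fun m => (b m)⁻¹) * E * B⁻¹
            * ((pairedDiagonal fun m => b m / (t₁ m + t₂ m)) * pairedDiagonal a) := by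
            rw [← mul_assoc B B⁻¹, Matrix.mul_nonsing_inv B hBdet, one_mul]
            simp only [mul_assoc]
        _ = pairedDiagonal (fun m => a m ^ 2 / (t₁ m + t₂ m))
          + pairedDiagonal (fun m => a m * b m / (t₁ m + t₂ m)) * B⁻¹
            * pairedDiagonal (fun m => a m * b m / (t₁ m + t₂ m)) := by
            simp only [hE_def, pd_mul, ← mul_assoc]
            congr 1
            · exact pd_ext fun m => by
                field_simp [(hb0 m).ne', (hr m).ne']
            · congr 1
              · congr 1
                exact pd_ext fun m => by
                  field_simp [(hb0 m).ne', (hr m).ne']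
              · exact pd_ext fun m => by ring
    rw [hX, sub_add_eq_sub_sub]
    congr 1
    rw [pd_sub]
    exact pd_ext fun m => by
      simp only [hs_def]
      field_simp [(hr m).ne']
      rw [ha2 m]
      ring
  · simp only [Matrix.mulVec_mulVec]
    rw [hMinv, pd_ext hcc]
    have hDbrDb : (pairedDiagonal fun m => b m / (t₁ m + t₂ m)) * pairedDiagonal b = E := by
      rw [pd_mul, hE_def]
      exact pd_ext fun m => by ring
    have hY : pairedDiagonal a
          * (((pairedDiagonal fun m => (b m)⁻¹) * A * B⁻¹
              * pairedDiagonal fun m => b m / (t₁ m + t₂ m))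
            * (pairedDiagonal b * A⁻¹))
        = pairedDiagonal (fun m => a m * b m / (t₁ m + t₂ m)) * B⁻¹ := by
      calc pairedDiagonal a
            * (((pairedDiagonal fun m => (b m)⁻¹) * A * B⁻¹
                * pairedDiagonal fun m => b m / (t₁ m + t₂ m))
              * (pairedDiagonal b * A⁻¹))
          = (pairedDiagonal a * pairedDiagonal fun m => (b m)⁻¹)
            * (A * B⁻¹ * E * A⁻¹) := by
            simp only [mul_assoc]
            rw [← mul_assoc (pairedDiagonal fun m => b m / (t₁ m + t₂ m))
              (pairedDiagonal b) A⁻¹, hDbrDb]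
        _ = (pairedDiagonal a * pairedDiagonal fun m => (b m)⁻¹) * (E * B⁻¹) := by
            rw [hkey2]
        _ = pairedDiagonal (fun m => a m * b m / (t₁ m + t₂ m)) * B⁻¹ := by
            rw [pd_mul, ← mul_assoc, hE_def, pd_mul]
            congr 1
            exact pd_ext fun m => by
              field_simp [(hb0 m).ne', (hr m).ne']
    rw [hY]
end
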